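/- arXiv:1406.6755 — 3 statements merged into one kernel-verified Lean document; each statement's English description precedes it below -/
import Mathlib

section
/- Let G ∈ ℝ^{m×n}, b ∈ ℝ^m, A_c ∈ ℝ^{n×n}, and suppose there exists a matrix H ∈ ℝ^{m×m} with all off-diagonal entries nonnegative such that HG = GA_c and Hb ≤ 0. Fix p ∈ ℕ with p ≥ 1 and define A_d(Δt) = Σ_{i=0}^p (1/i!)·A_c^i·Δt^i. Then there exists τ > 0 such that for every Δt ∈ [0,τ] and every x ∈ ℝⁿ with Gx ≤ b, we have G·A_d(Δt)·x ≤ b; that is, the p-th order Taylor approximation type discretization is invariance preserving on the polyhedron P = {x : Gx ≤ b} for all steplengths in [0,τ]. -/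
/-!
Writing `T(Δt) = ∑_{k ≤ p} Δt^k / k! • H^k`, the relation `H G = G A_c` gives
`G A_d(Δt) = T(Δt) G`, so it suffices that `T(Δt)` is entrywise nonnegative and `T(Δt) b ≤ b`
for small `Δt`. Both are sign conditions on polynomials in `Δt` whose coefficients are positive
multiples of `(H^k u)_i` for nonpositive vectors `u` (`u = -e_j`, resp. `u = H b` after factoring
out `Δt`). Since `H + c • 1` is nonnegative for large `c`, the first nonzero term of `((H^k u)_i)_k`
is negative, and a polynomial whose first nonzero coefficient is positive is nonnegative on some
`[0, τ]`.
-/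

open Filter Topology Finset

theorem eventually_nonneg_sum_mul_pow (N : ℕ) (a : ℕ → ℝ)
    (ha : ∀ k < N, (∀ j < k, a j = 0) → 0 ≤ a k) :
    ∀ᶠ t in 𝓝[≥] (0 : ℝ), 0 ≤ ∑ k ∈ range N, a k * t ^ k := by
  induction N generalizing a with
  | zero => simp
  | succ N ih =>
    have ha0 : 0 ≤ a 0 := ha 0 N.succ_pos fun j hj => absurd hj j.not_lt_zero
    rcases ha0.eq_or_lt with hzero | hpos
    · have htail := ih (fun k => a (k + 1)) fun k hk hprev =>
        ha (k + 1) (by omega) fun j hj => by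
          cases j with
          | zero => exact hzero.symm
          | succ j => exact hprev j (by omega)
      filter_upwards [htail, self_mem_nhdsWithin] with t ht (ht0 : 0 ≤ t)
      have hsplit : ∑ k ∈ range (N + 1), a k * t ^ k
          = t * ∑ k ∈ range N, a (k + 1) * t ^ k := by
        rw [sum_range_succ', ← hzero, mul_sum]
        simp only [pow_succ, zero_mul, add_zero]
        exact sum_congr rfl fun k _ => by ring
      rw [hsplit]
      exact mul_nonneg ht0 ht
    · have hcont : Continuous fun t : ℝ => ∑ k ∈ range (N + 1), a k * t ^ k := by fun_prop
      have hpos0 : 0 < ∑ k ∈ range (N + 1), a k * (0 : ℝ) ^ k := by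
        simpa [sum_range_succ'] using hpos
      have hnear := (hcont.tendsto 0).eventually (lt_mem_nhds hpos0)
      exact (hnear.filter_mono nhdsWithin_le_nhds).mono fun t ht => ht.le

namespace Matrix

variable {ι : Type*} [Fintype ι] [DecidableEq ι]

theorem exists_nonneg_add_smul_one {H : Matrix ι ι ℝ} (hH : ∀ i j, i ≠ j → 0 ≤ H i j) :
    ∃ c : ℝ, ∀ i j, 0 ≤ (H + c • 1) i j := by
  refine ⟨∑ l, |H l l|, fun i j => ?_⟩
  rcases eq_or_ne i j with rfl | hij
  · have hdiag : |H i i| ≤ ∑ l, |H l l| :=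
      single_le_sum (f := fun l => |H l l|) (fun l _ => abs_nonneg _) (mem_univ i)
    simp only [add_apply, smul_apply, one_apply_eq, smul_eq_mul, mul_one]
    linarith [neg_abs_le (H i i)]
  · simpa [one_apply_ne hij] using hH i j hij

theorem add_smul_one_pow_mulVec {R : Type*} [CommSemiring R] (H : Matrix ι ι R) (c : R)
    (u : ι → R) (k : ℕ) :
    (H + c • 1) ^ k *ᵥ u = ∑ r ∈ range (k + 1), (c ^ (k - r) * k.choose r) • (H ^ r *ᵥ u) := by
  rw [((Commute.one_right H).smul_right c).add_pow, sum_mulVec]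
  refine sum_congr rfl fun r _ => ?_
  rw [smul_pow, one_pow, mul_smul_comm, mul_one, ← Nat.cast_comm, ← nsmul_eq_mul,
    ← Nat.cast_smul_eq_nsmul R, smul_smul, smul_mulVec, mul_comm]

theorem pow_mulVec_apply_nonpos {H : Matrix ι ι ℝ} (hH : ∀ i j, i ≠ j → 0 ≤ H i j)
    {u : ι → ℝ} (hu : u ≤ 0) {k : ℕ} {i : ι} (hprev : ∀ r < k, (H ^ r *ᵥ u) i = 0) :
    (H ^ k *ᵥ u) i ≤ 0 := by
  obtain ⟨c, hc⟩ := exists_nonneg_add_smul_one hH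
  -- binomially, `(H + c • 1) ^ k *ᵥ u` is `H ^ k *ᵥ u` plus multiples of the vanishing `H ^ r *ᵥ u`
  have hshift : (H ^ k *ᵥ u) i = ((H + c • 1) ^ k *ᵥ u) i := by
    rw [add_smul_one_pow_mulVec, sum_range_succ, Pi.add_apply, Finset.sum_apply,
      sum_eq_zero fun r hr => by rw [Pi.smul_apply, hprev r (mem_range.mp hr), smul_zero]]
    simp
  calc (H ^ k *ᵥ u) i = ((H + c • 1) ^ k *ᵥ u) i := hshift
    _ ≤ ((H + c • 1) ^ k *ᵥ 0) i :=
      dotProduct_le_dotProduct_of_nonneg_left hu fun j => pow_apply_nonneg hc k i j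
    _ = 0 := by rw [mulVec_zero, Pi.zero_apply]

theorem eventually_sum_smul_pow_mulVec_nonpos {H : Matrix ι ι ℝ}
    (hH : ∀ i j, i ≠ j → 0 ≤ H i j) {u : ι → ℝ} (hu : u ≤ 0) {w : ℕ → ℝ} (hw : ∀ k, 0 < w k)
    (N : ℕ) : ∀ᶠ t in 𝓝[≥] (0 : ℝ), (∑ k ∈ range N, (w k * t ^ k) • H ^ k) *ᵥ u ≤ 0 := by
  simp only [Pi.le_def, eventually_all]
  intro i
  have hpoly := eventually_nonneg_sum_mul_pow N (fun k => -(w k * (H ^ k *ᵥ u) i))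
    fun k _ hprev => neg_nonneg.mpr <| mul_nonpos_of_nonneg_of_nonpos (hw k).le <|
      pow_mulVec_apply_nonpos hH hu fun r hr =>
        (mul_eq_zero.mp (neg_eq_zero.mp (hprev r hr))).resolve_left (hw r).ne'
  filter_upwards [hpoly] with t ht
  simp only [sum_mulVec, smul_mulVec, Finset.sum_apply, Pi.smul_apply, smul_eq_mul,
    Pi.zero_apply] at ht ⊢
  simp only [neg_mul, sum_neg_distrib, neg_nonneg] at ht
  convert ht using 2 with k
  ring

theorem sum_smul_pow_mulVec_eq {R : Type*} [CommRing R] (H : Matrix ι ι R) (c : ℕ → R)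
    (t : R) (b : ι → R) (p : ℕ) :
    (∑ k ∈ range (p + 1), (c k * t ^ k) • H ^ k) *ᵥ b
      = c 0 • b + t • ((∑ k ∈ range p, (c (k + 1) * t ^ k) • H ^ k) *ᵥ (H *ᵥ b)) := by
  rw [sum_range_succ', add_comm, add_mulVec, mulVec_mulVec, Matrix.sum_mul, sum_mulVec, sum_mulVec,
    smul_sum]
  congr 1
  · rw [pow_zero, pow_zero, mul_one, smul_mulVec, one_mulVec]
  · refine sum_congr rfl fun k _ => ?_
    rw [smul_mul, smul_mulVec, smul_mulVec, smul_smul, pow_succ, pow_succ]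
    ring_nf

theorem mul_pow_eq_pow_mul {m n : Type*} [Fintype m] [DecidableEq m] [Fintype n] [DecidableEq n]
    {R : Type*} [Semiring R] {G : Matrix m n R} {A : Matrix n n R} {H : Matrix m m R}
    (h : H * G = G * A) (k : ℕ) : G * A ^ k = H ^ k * G := by
  induction k with
  | zero => simp
  | succ k ih => rw [pow_succ, pow_succ, ← Matrix.mul_assoc, ih, Matrix.mul_assoc, ← h,
      Matrix.mul_assoc]

theorem mul_sum_smul_pow {m n : Type*} [Fintype m] [DecidableEq m] [Fintype n] [DecidableEq n]
    {R : Type*} [CommSemiring R] {G : Matrix m n R} {A : Matrix n n R} {H : Matrix m m R}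
    (h : H * G = G * A) (s : Finset ℕ) (c : ℕ → R) :
    G * ∑ k ∈ s, c k • A ^ k = (∑ k ∈ s, c k • H ^ k) * G := by
  rw [Matrix.mul_sum, Matrix.sum_mul]
  exact sum_congr rfl fun k _ => by rw [Matrix.mul_smul, Matrix.smul_mul, mul_pow_eq_pow_mul h]

theorem mulVec_le_mulVec_of_nonneg {m n : Type*} [Fintype n] {R : Type*} [Semiring R]
    [PartialOrder R] [IsOrderedRing R] {M : Matrix m n R} (hM : ∀ i j, 0 ≤ M i j)
    {u v : n → R} (huv : u ≤ v) : M *ᵥ u ≤ M *ᵥ v :=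
  fun i => dotProduct_le_dotProduct_of_nonneg_left huv (hM i)

end Matrix

open Matrix

theorem stmt_4_general {m n : ℕ} (G : Matrix (Fin m) (Fin n) ℝ) (b : Fin m → ℝ)
    (Ac : Matrix (Fin n) (Fin n) ℝ)
    (hH : ∃ H : Matrix (Fin m) (Fin m) ℝ,
      (∀ i j, i ≠ j → 0 ≤ H i j) ∧ H * G = G * Ac ∧ ∀ i, H.mulVec b i ≤ 0)
    (p : ℕ) :
    ∃ τ : ℝ, 0 < τ ∧ ∀ Δt ∈ Set.Icc (0 : ℝ) τ, ∀ x : Fin n → ℝ,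
      (∀ i, G.mulVec x i ≤ b i) →
      ∀ i, G.mulVec ((∑ k ∈ Finset.range (p + 1),
          ((Nat.factorial k : ℝ)⁻¹ * Δt ^ k) • Ac ^ k).mulVec x) i ≤ b i := by
  obtain ⟨H, hH, hHG, hHb⟩ := hH
  set T : ℝ → Matrix (Fin m) (Fin m) ℝ :=
    fun t => ∑ k ∈ range (p + 1), ((Nat.factorial k : ℝ)⁻¹ * t ^ k) • H ^ k
  have hcols : ∀ᶠ t in 𝓝[≥] (0 : ℝ), ∀ j, T t *ᵥ -Pi.single j 1 ≤ 0 :=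
    eventually_all.mpr fun j => eventually_sum_smul_pow_mulVec_nonpos hH
      (neg_nonpos.mpr (Pi.single_nonneg.mpr zero_le_one)) (fun k => by positivity) _
  have hdrift : ∀ᶠ t in 𝓝[≥] (0 : ℝ),
      (∑ k ∈ range p, ((Nat.factorial (k + 1) : ℝ)⁻¹ * t ^ k) • H ^ k) *ᵥ (H *ᵥ b) ≤ 0 :=
    eventually_sum_smul_pow_mulVec_nonpos hH hHb (fun k => by positivity) p
  obtain ⟨τ, hτ, hsub⟩ :=
    mem_nhdsGE_iff_exists_Icc_subset.mp ((hcols.and hdrift).and self_mem_nhdsWithin)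
  refine ⟨τ, hτ, fun t ht x hx => ?_⟩
  obtain ⟨⟨hcol, hdr⟩, ht0 : 0 ≤ t⟩ := hsub ht
  have hT : ∀ i j, 0 ≤ T t i j := fun i j => by
    simpa [mulVec_neg, mulVec_single_one] using hcol j i
  have hTb : T t *ᵥ b ≤ b := by
    rw [sum_smul_pow_mulVec_eq, Nat.factorial_zero, Nat.cast_one, inv_one, one_smul]
    exact add_le_of_nonpos_right (smul_nonpos_of_nonneg_of_nonpos ht0 hdr)
  calc G *ᵥ ((∑ k ∈ range (p + 1), ((Nat.factorial k : ℝ)⁻¹ * t ^ k) • Ac ^ k) *ᵥ x)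
      = T t *ᵥ (G *ᵥ x) := by rw [mulVec_mulVec, mul_sum_smul_pow hHG, ← mulVec_mulVec]
    _ ≤ T t *ᵥ b := mulVec_le_mulVec_of_nonneg hT hx
    _ ≤ b := hTb

/-- If there is an off-diagonal nonnegative `H` with `HG = G Ac`
and `Hb ≤ 0`, then there is a steplength threshold `τ > 0` such that the
`p`-th order Taylor approximation type discretization is invariance preserving
on the polyhedron `{x : Gx ≤ b}` for all steplengths in `[0, τ]`. -/
theorem stmt_4 {m n : ℕ} (G : Matrix (Fin m) (Fin n) ℝ) (b : Fin m → ℝ)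
    (Ac : Matrix (Fin n) (Fin n) ℝ)
    (hH : ∃ H : Matrix (Fin m) (Fin m) ℝ,
      (∀ i j, i ≠ j → 0 ≤ H i j) ∧ H * G = G * Ac ∧ ∀ i, H.mulVec b i ≤ 0)
    (p : ℕ) (hp : 1 ≤ p) :
    ∃ τ : ℝ, 0 < τ ∧ ∀ Δt ∈ Set.Icc (0 : ℝ) τ, ∀ x : Fin n → ℝ,
      (∀ i, G.mulVec x i ≤ b i) →
      ∀ i, G.mulVec ((∑ k ∈ Finset.range (p + 1),
          ((Nat.factorial k : ℝ)⁻¹ * Δt ^ k) • Ac ^ k).mulVec x) i ≤ b i :=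
  stmt_4_general G b Ac hH p
end

section
/- Let G ∈ ℝ^{m×n}, b ∈ ℝ^m, A_c ∈ ℝ^{n×n}, and suppose there exists a matrix H ∈ ℝ^{m×m} with every entry nonnegative such that HG = GA_c and Hb ≤ 0. Then for every p ∈ ℕ, every Δt ≥ 0, and every x ∈ ℝⁿ with Gx ≤ b, we have G·(Σ_{i=0}^p (1/i!)·A_c^i·Δt^i)·x ≤ b. In other words, if the optimal γ in the invariance condition is nonpositive, the steplength threshold for invariance preserving of Taylor approximation type discretization methods on the polyhedron P = {x : Gx ≤ b} is infinite. -/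
/-!
If `H ≥ 0` intertwines `G` and `A` (`H G = G A`), then `G q(A) = q(H) G` for every polynomial
`q`. For `q(t) = ∑ₖ cₖ tᵏ` with `c₀ = 1` and `cₖ ≥ 0`, the matrix `q(H)` is entrywise nonnegative,
so `G x ≤ b` gives `G q(A) x = q(H) G x ≤ q(H) b = b + ∑_{k ≥ 1} cₖ Hᵏ⁻¹ (H b) ≤ b`.
The truncated Taylor series of `exp (Δt A)` has such coefficients whenever `Δt ≥ 0`.
-/

open Finset

namespace Matrix

variable {m n R : Type*} [Fintype m] [Fintype n] [DecidableEq m] [DecidableEq n]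

theorem pow_mul_eq_mul_pow_of_mul_eq [Semiring R] {H : Matrix m m R} {G : Matrix m n R}
    {A : Matrix n n R} (h : H * G = G * A) (k : ℕ) : H ^ k * G = G * A ^ k := by
  induction k with
  | zero => simp
  | succ k ih => rw [pow_succ, pow_succ, Matrix.mul_assoc, h, ← Matrix.mul_assoc, ih,
      Matrix.mul_assoc]

theorem sum_smul_pow_mul_eq_mul_sum_smul_pow [CommSemiring R] {H : Matrix m m R}
    {G : Matrix m n R} {A : Matrix n n R} (h : H * G = G * A) (s : Finset ℕ) (c : ℕ → R) :
    (∑ k ∈ s, c k • H ^ k) * G = G * ∑ k ∈ s, c k • A ^ k := by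
  simp only [Matrix.sum_mul, Matrix.mul_sum, Matrix.smul_mul, Matrix.mul_smul,
    pow_mul_eq_mul_pow_of_mul_eq h]

variable [CommRing R] [PartialOrder R] [IsOrderedRing R]

omit [Fintype m] [DecidableEq m] [DecidableEq n] in
theorem mulVec_mono_of_nonneg {M : Matrix m n R} (hM : ∀ i j, 0 ≤ M i j) {u v : n → R}
    (huv : u ≤ v) : M *ᵥ u ≤ M *ᵥ v := fun i =>
  dotProduct_le_dotProduct_of_nonneg_left huv (hM i)

omit [DecidableEq n] in
theorem sum_smul_pow_apply_nonneg {H : Matrix m m R} (hH : ∀ i j, 0 ≤ H i j) (s : Finset ℕ)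
    {c : ℕ → R} (hc : ∀ k, 0 ≤ c k) (i j : m) : 0 ≤ (∑ k ∈ s, c k • H ^ k) i j := by
  rw [Matrix.sum_apply]
  exact Finset.sum_nonneg fun k _ => mul_nonneg (hc k) (pow_apply_nonneg hH k i j)

omit [DecidableEq n] in
theorem pow_succ_mulVec_nonpos {H : Matrix m m R} (hH : ∀ i j, 0 ≤ H i j) {b : m → R}
    (hb : H *ᵥ b ≤ 0) (k : ℕ) : H ^ (k + 1) *ᵥ b ≤ 0 := by
  rw [pow_succ, ← mulVec_mulVec]
  simpa using mulVec_mono_of_nonneg (pow_apply_nonneg hH k) hb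

theorem mulVec_sum_smul_pow_mulVec_le {H : Matrix m m R} {G : Matrix m n R} {A : Matrix n n R}
    {b : m → R} (hH : ∀ i j, 0 ≤ H i j) (hHG : H * G = G * A) (hHb : H *ᵥ b ≤ 0)
    {c : ℕ → R} (hc₀ : c 0 = 1) (hc : ∀ k, 0 ≤ c k) (p : ℕ) {x : n → R} (hx : G *ᵥ x ≤ b) :
    G *ᵥ ((∑ k ∈ range (p + 1), c k • A ^ k) *ᵥ x) ≤ b := by
  have hterm : ∀ k, c (k + 1) • H ^ (k + 1) *ᵥ b ≤ 0 := fun k =>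
    smul_nonpos_of_nonneg_of_nonpos (hc _) (pow_succ_mulVec_nonpos hH hHb k)
  calc G *ᵥ ((∑ k ∈ range (p + 1), c k • A ^ k) *ᵥ x)
      = (∑ k ∈ range (p + 1), c k • H ^ k) *ᵥ (G *ᵥ x) := by
        rw [mulVec_mulVec, mulVec_mulVec, sum_smul_pow_mul_eq_mul_sum_smul_pow hHG]
    _ ≤ (∑ k ∈ range (p + 1), c k • H ^ k) *ᵥ b :=
        mulVec_mono_of_nonneg (sum_smul_pow_apply_nonneg hH _ hc) hx
    _ = b + ∑ k ∈ range p, c (k + 1) • H ^ (k + 1) *ᵥ b := by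
        rw [sum_range_succ', add_mulVec, sum_mulVec, hc₀, one_smul, pow_zero, one_mulVec,
          add_comm]
        simp only [smul_mulVec]
    _ ≤ b := add_le_of_nonpos_right (Finset.sum_nonpos fun k _ => hterm k)

end Matrix

/-- If there is an entrywise nonnegative `H` with `HG = G Ac` and
`Hb ≤ 0`, then Taylor approximation type discretizations of every order `p` are
invariance preserving on `{x : Gx ≤ b}` for every steplength `Δt ≥ 0` (infinite
steplength threshold). -/
theorem stmt_10 {m n : ℕ} (G : Matrix (Fin m) (Fin n) ℝ) (b : Fin m → ℝ)
    (Ac : Matrix (Fin n) (Fin n) ℝ)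
    (hH : ∃ H : Matrix (Fin m) (Fin m) ℝ,
      (∀ i j, 0 ≤ H i j) ∧ H * G = G * Ac ∧ ∀ i, H.mulVec b i ≤ 0) :
    ∀ p : ℕ, ∀ Δt : ℝ, 0 ≤ Δt → ∀ x : Fin n → ℝ,
      (∀ i, G.mulVec x i ≤ b i) →
      ∀ i, G.mulVec ((∑ k ∈ Finset.range (p + 1),
          ((Nat.factorial k : ℝ)⁻¹ * Δt ^ k) • Ac ^ k).mulVec x) i ≤ b i := by
  obtain ⟨H, hH, hHG, hHb⟩ := hH
  intro p Δt hΔt x hx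
  exact Matrix.mulVec_sum_smul_pow_mulVec_le hH hHG hHb (by simp) (fun k => by positivity) p hx
end

section
/- Let G ∈ ℝ^{m×n}, b ∈ ℝ^m, A_c ∈ ℝ^{n×n}, and suppose there exists a matrix H ∈ ℝ^{m×m} with all off-diagonal entries nonnegative such that HG = GA_c and Hb ≤ 0. Then the polyhedron P = {x ∈ ℝⁿ : Gx ≤ b} is an invariant set for the continuous system ẋ = A_c x; that is, for every t ≥ 0 and every x ∈ ℝⁿ with Gx ≤ b, we have G·exp(t·A_c)·x ≤ b. -/
/-!
Since `H G = G Ac`, the exponentials intertwine as well: `G exp(t Ac) = exp(t H) G`, so it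
suffices that `exp(t H)` maps `{y : y ≤ b}` into itself. Shifting by a multiple of the identity,
`N = t H + c I` is entrywise nonnegative for some `c ≥ 0`, and `t H b ≤ 0` gives `N b ≤ c b`.
For `y ≤ b`, induction gives `N^k y ≤ c^k b`, hence `exp N y ≤ e^c b`, and
`exp(t H) y = e^{-c} exp N y ≤ b`.
-/

open NormedSpace Matrix
open scoped Nat

namespace Matrix

variable {ι κ : Type*} [Fintype κ]

theorem mulVec_le_mulVec_of_nonneg_s14 {N : Matrix ι κ ℝ} (hN : ∀ i j, 0 ≤ N i j)
    {u v : κ → ℝ} (huv : u ≤ v) : N *ᵥ u ≤ N *ᵥ v := fun i =>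
  Finset.sum_le_sum fun j _ => mul_le_mul_of_nonneg_left (huv j) (hN i j)

variable [Fintype ι] [DecidableEq ι] [DecidableEq κ]

theorem pow_mul_eq_mul_pow_of_mul_eq_mul {H : Matrix ι ι ℝ} {A : Matrix κ κ ℝ}
    {G : Matrix ι κ ℝ} (h : H * G = G * A) (k : ℕ) :
    H ^ k * G = G * A ^ k := by
  induction k with
  | zero => simp
  | succ k ih =>
    rw [pow_succ, pow_succ, Matrix.mul_assoc, h, ← Matrix.mul_assoc, ih, Matrix.mul_assoc]

open scoped Norms.Operator

theorem exp_add_algebraMap (A : Matrix ι ι ℝ) (c : ℝ) :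
    exp (A + algebraMap ℝ _ c) = Real.exp c • exp A := by
  have hc : exp (algebraMap ℝ (Matrix ι ι ℝ) c) = algebraMap ℝ _ (Real.exp c) := by
    rw [Real.exp_eq_exp_ℝ]
    exact (algebraMap_exp_comm c).symm
  rw [exp_add_of_commute _ _ (Algebra.commutes c A).symm, hc, ← Algebra.commutes,
    ← Algebra.smul_def]

theorem exp_mul_eq_mul_exp_of_mul_eq_mul {H : Matrix ι ι ℝ} {A : Matrix κ κ ℝ}
    {G : Matrix ι κ ℝ} (h : H * G = G * A) : exp H * G = G * exp A := by
  have hH : HasSum (fun k : ℕ => ((k !⁻¹ : ℝ) • H ^ k) * G) (exp H * G) :=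
    (exp_series_hasSum_exp' H).map (addMonoidHomMulRight G)
      (continuous_id.matrix_mul continuous_const)
  have hA : HasSum (fun k : ℕ => G * ((k !⁻¹ : ℝ) • A ^ k)) (G * exp A) :=
    (exp_series_hasSum_exp' A).map (addMonoidHomMulLeft G)
      (continuous_const.matrix_mul continuous_id)
  refine hH.unique ?_
  simpa only [Matrix.smul_mul, Matrix.mul_smul, pow_mul_eq_mul_pow_of_mul_eq_mul h] using hA

theorem pow_mulVec_le_of_nonneg {N : Matrix ι ι ℝ} (hN : ∀ i j, 0 ≤ N i j) {c : ℝ}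
    (hc : 0 ≤ c) {b y : ι → ℝ} (hb : N *ᵥ b ≤ c • b) (hy : y ≤ b) (k : ℕ) :
    N ^ k *ᵥ y ≤ c ^ k • b := by
  induction k with
  | zero => simpa using hy
  | succ k ih =>
    calc N ^ (k + 1) *ᵥ y = N *ᵥ (N ^ k *ᵥ y) := by rw [pow_succ', mulVec_mulVec]
      _ ≤ N *ᵥ (c ^ k • b) := mulVec_le_mulVec_of_nonneg_s14 hN ih
      _ = c ^ k • (N *ᵥ b) := mulVec_smul _ _ _
      _ ≤ c ^ k • c • b := smul_le_smul_of_nonneg_left hb (pow_nonneg hc k)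
      _ = c ^ (k + 1) • b := by rw [smul_smul, pow_succ]

theorem exp_mulVec_le_of_nonneg {N : Matrix ι ι ℝ} (hN : ∀ i j, 0 ≤ N i j) {c : ℝ}
    (hc : 0 ≤ c) {b y : ι → ℝ} (hb : N *ᵥ b ≤ c • b) (hy : y ≤ b) :
    exp N *ᵥ y ≤ Real.exp c • b := by
  have hexpN : HasSum (fun k : ℕ => ((k !⁻¹ : ℝ) • N ^ k) *ᵥ y) (exp N *ᵥ y) :=
    (exp_series_hasSum_exp' N).map (mulVec.addMonoidHomLeft y)
      (continuous_id.matrix_mulVec continuous_const)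
  have hexpc := (exp_series_hasSum_exp' (𝕂 := ℝ) c).smul_const b
  rw [← Real.exp_eq_exp_ℝ] at hexpc
  refine hasSum_le (fun k => ?_) hexpN hexpc
  rw [smul_mulVec, smul_assoc]
  exact smul_le_smul_of_nonneg_left (pow_mulVec_le_of_nonneg hN hc hb hy k) (by positivity)

theorem exists_nonneg_add_algebraMap_nonneg {H : Matrix ι ι ℝ}
    (hH : ∀ i j, i ≠ j → 0 ≤ H i j) :
    ∃ c : ℝ, 0 ≤ c ∧ ∀ i j, 0 ≤ (H + algebraMap ℝ _ c) i j := by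
  refine ⟨∑ l, |H l l|, by positivity, fun i j => ?_⟩
  rw [add_apply, algebraMap_matrix_apply]
  by_cases hij : i = j
  · subst hij
    have hii : |H i i| ≤ ∑ l, |H l l| :=
      Finset.single_le_sum (fun l _ => abs_nonneg (H l l)) (Finset.mem_univ i)
    simp only [if_true, Algebra.algebraMap_self, RingHom.id_apply]
    linarith [neg_abs_le (H i i)]
  · simpa [hij] using hH i j hij

theorem exp_mulVec_le_of_offDiag_nonneg {H : Matrix ι ι ℝ}
    (hH : ∀ i j, i ≠ j → 0 ≤ H i j) {b y : ι → ℝ} (hb : H *ᵥ b ≤ 0) (hy : y ≤ b) :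
    exp H *ᵥ y ≤ b := by
  obtain ⟨c, hc, hN⟩ := exists_nonneg_add_algebraMap_nonneg hH
  have hNb : (H + algebraMap ℝ _ c) *ᵥ b ≤ c • b := by
    rw [add_mulVec, Algebra.algebraMap_eq_smul_one, smul_mulVec, one_mulVec]
    simpa using add_le_add_right hb (c • b)
  have hexp : exp H = Real.exp (-c) • exp (H + algebraMap ℝ _ c) := by
    rw [exp_add_algebraMap, smul_smul, ← Real.exp_add, neg_add_cancel, Real.exp_zero, one_smul]
  calc exp H *ᵥ y = Real.exp (-c) • (exp (H + algebraMap ℝ _ c) *ᵥ y) := by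
        rw [hexp, smul_mulVec]
    _ ≤ Real.exp (-c) • Real.exp c • b :=
        smul_le_smul_of_nonneg_left (exp_mulVec_le_of_nonneg hN hc hNb hy) (Real.exp_pos _).le
    _ = b := by rw [smul_smul, ← Real.exp_add, neg_add_cancel, Real.exp_zero, one_smul]

end Matrix

/-- If there is an off-diagonal nonnegative `H` with `HG = G Ac`
and `Hb ≤ 0`, then the polyhedron `{x : Gx ≤ b}` is invariant for the
continuous system `ẋ = Ac x`: for every `t ≥ 0`, `Gx ≤ b` implies
`G (exp(t Ac) x) ≤ b`. -/
theorem stmt_14 {m n : ℕ} (G : Matrix (Fin m) (Fin n) ℝ) (b : Fin m → ℝ)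
    (Ac : Matrix (Fin n) (Fin n) ℝ)
    (hH : ∃ H : Matrix (Fin m) (Fin m) ℝ,
      (∀ i j, i ≠ j → 0 ≤ H i j) ∧ H * G = G * Ac ∧ ∀ i, H.mulVec b i ≤ 0) :
    ∀ t : ℝ, 0 ≤ t → ∀ x : Fin n → ℝ, (∀ i, G.mulVec x i ≤ b i) →
      ∀ i, G.mulVec ((NormedSpace.exp (t • Ac)).mulVec x) i ≤ b i := by
  obtain ⟨H, hH, hHG, hHb⟩ := hH
  intro t ht x hx
  have hexp : exp (t • H) * G = G * exp (t • Ac) :=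
    exp_mul_eq_mul_exp_of_mul_eq_mul (by rw [Matrix.smul_mul, Matrix.mul_smul, hHG])
  have hG : G *ᵥ (exp (t • Ac) *ᵥ x) = exp (t • H) *ᵥ (G *ᵥ x) := by
    rw [mulVec_mulVec, mulVec_mulVec, hexp]
  rw [hG]
  exact exp_mulVec_le_of_offDiag_nonneg (H := t • H)
    (fun i j hij => mul_nonneg ht (hH i j hij))
    (by rw [smul_mulVec]; exact smul_nonpos_of_nonneg_of_nonpos ht hHb) hx
end
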